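/- arXiv:2310.02483 — 2 statements merged into one kernel-verified Lean document; each statement's English description precedes it below -/
import Mathlib

section
/- Let m, r ≥ 1, let a = (a_1, …, a_{2m}) be a sequence of nonzero integers, let ε_1, …, ε_{2r+1} ∈ {1, −1} with ε_1 = 1, and let c_1, …, c_{2r} be nonzero integers. Let ã be the concatenated sequence (ε_1 a, c_1, ε_2 a^{rev}, c_2, ε_3 a, c_3, ε_4 a^{rev}, c_4, …, ε_{2r} a^{rev}, c_{2r}, ε_{2r+1} a), where ε a denotes the sequence (ε a_1, …, ε a_{2m}) and a^{rev} = (a_{2m}, …, a_1); thus blocks alternate between a and its reverse, each block scaled by the sign ε_j, with the single entries c_j inserted between consecutive blocks. Then B(ã) ≥ 3·B(a) − 4. (This is the combinatorial core of the theorem that if there is an epimorphism from the group of a two-bridge knot K onto the group of a knot K′, then braid(K) ≥ 3·braid(K′) − 4: by the Ohtsuki–Riley–Sakuma theorem, the continued fraction of K has exactly the form ã above, built from the continued fraction a of K′.) -/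
/-!
Gluing two sequences creates at most one new sign change, so
`B(L₁ ++ L₂) ≥ B(L₁) + B(L₂) - 2`. Reversing a sequence or multiplying it by a sign
does not change `B`, and `B [c] = |c| + 1 ≥ 2` for `c ≠ 0`. Cutting `ã` into the
`2r` pieces `(±a or ±a^rev, c_j)` and the final block `±a` therefore gives
`B(ã) ≥ 2r (B(a) - 2) + B(a)`, which exceeds `3 B(a) - 4` by `2 (r - 1) (B(a) - 2) ≥ 0`:
a nonempty sequence of nonzero integers has `∑ |a_i| ≥ N` and `t(a) ≤ N - 1`, so `B(a) ≥ 2`.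
-/

/-- The number of sign changes of a finite sequence of integers:
the number of indices `i` with `x_i * x_{i+1} < 0` for consecutive entries. -/
def signChanges (L : List ℤ) : ℕ :=
  ((Finset.range (L.length - 1)).filter (fun i => L.getD i 0 * L.getD (i + 1) 0 < 0)).card

/-- `B(a) = (∑ |a_i|) - t(a) + 1`; if `a` is a reduced even continued fraction
`(2a_1, …, 2a_{2m})` then `B(a)` is the braid index of the corresponding
two-bridge knot `K([2a_1, …, 2a_{2m}])`. -/
def braidB (L : List ℤ) : ℤ :=
  (L.map (fun x => |x|)).sum - (signChanges L : ℤ) + 1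

/-- The Ohtsuki–Riley–Sakuma-type concatenated sequence
`(ε₁ a, c₁, ε₂ a⁻¹, c₂, ε₃ a, c₃, …, ε₂ᵣ a⁻¹, c₂ᵣ, ε₂ᵣ₊₁ a)`,
indexed from `0`: block `j` (for `0 ≤ j ≤ 2r`) is `ε (j) • a` if `j` is even and
`ε (j) • a.reverse` if `j` is odd, and the single entry `c j` is inserted after
block `j` for `j < 2r`. -/
def tildeSeq (r : ℕ) (a : List ℤ) (ε : ℕ → ℤ) (c : ℕ → ℤ) : List ℤ :=
  ((List.range (2 * r)).flatMap (fun j =>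
    ((if j % 2 = 0 then a else a.reverse).map (fun x => ε j * x)) ++ [c j]))
    ++ (a.map (fun x => ε (2 * r) * x))

@[simp]
lemma signChanges_nil : signChanges [] = 0 := rfl

@[simp]
lemma signChanges_singleton (x : ℤ) : signChanges [x] = 0 := rfl

lemma signChanges_cons_cons (x y : ℤ) (L : List ℤ) :
    signChanges (x :: y :: L) = (if x * y < 0 then 1 else 0) + signChanges (y :: L) := by
  unfold signChanges
  simp only [List.length_cons, Nat.add_sub_cancel]
  rw [Finset.card_filter, Finset.card_filter, Finset.sum_range_succ', add_comm]
  rfl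

lemma signChanges_cons_le (x : ℤ) (L : List ℤ) :
    signChanges (x :: L) ≤ signChanges L + 1 := by
  cases L with
  | nil => simp
  | cons y L => rw [signChanges_cons_cons]; split_ifs <;> omega

lemma signChanges_append_pair (x y : ℤ) : ∀ L : List ℤ,
    signChanges (L ++ [x, y]) = signChanges (L ++ [x]) + (if x * y < 0 then 1 else 0)
  | [] => by simp [signChanges_cons_cons]
  | [_] => by simp [signChanges_cons_cons]
  | z :: w :: L => by
    simp only [List.cons_append]
    rw [signChanges_cons_cons, ← List.cons_append, signChanges_append_pair x y (w :: L),
      List.cons_append, signChanges_cons_cons]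
    omega

lemma signChanges_reverse : ∀ L : List ℤ, signChanges L.reverse = signChanges L
  | [] => rfl
  | [_] => rfl
  | x :: y :: L => by
    rw [List.reverse_cons, List.reverse_cons, List.append_assoc, List.singleton_append,
      signChanges_append_pair, ← List.reverse_cons, signChanges_reverse (y :: L),
      signChanges_cons_cons, mul_comm y x]
    omega

lemma signChanges_map_mul {e : ℤ} (he : e ≠ 0) : ∀ L : List ℤ,
    signChanges (L.map (e * ·)) = signChanges L
  | [] => rfl
  | [_] => rfl
  | x :: y :: L => by
    have hsign : e * x * (e * y) < 0 ↔ x * y < 0 := by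
      have hsq : 0 < e * e := mul_self_pos.mpr he
      rw [show e * x * (e * y) = (e * e) * (x * y) by ring]
      simp [mul_neg_iff, hsq, hsq.not_gt]
    rw [List.map_cons, List.map_cons, signChanges_cons_cons, ← List.map_cons,
      signChanges_map_mul he (y :: L), signChanges_cons_cons]
    simp only [hsign]

lemma signChanges_append_le (L₁ L₂ : List ℤ) :
    signChanges (L₁ ++ L₂) ≤ signChanges L₁ + signChanges L₂ + 1 := by
  induction L₁ with
  | nil => simp
  | cons x L₁ ih =>
    cases L₁ with
    | nil => simpa using signChanges_cons_le x L₂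
    | cons z L₁ =>
      rw [List.cons_append, List.cons_append, signChanges_cons_cons, signChanges_cons_cons]
      rw [List.cons_append] at ih
      omega

lemma braidB_reverse (L : List ℤ) : braidB L.reverse = braidB L := by
  simp [braidB, signChanges_reverse, List.map_reverse, List.sum_reverse]

lemma braidB_map_mul {e : ℤ} (he : |e| = 1) (L : List ℤ) :
    braidB (L.map (e * ·)) = braidB L := by
  have he0 : e ≠ 0 := by rintro rfl; simp at he
  simp [braidB, signChanges_map_mul he0, Function.comp_def, abs_mul, he]

lemma braidB_singleton (x : ℤ) : braidB [x] = |x| + 1 := by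
  simp [braidB]

lemma le_braidB_append (L₁ L₂ : List ℤ) :
    braidB L₁ + braidB L₂ - 2 ≤ braidB (L₁ ++ L₂) := by
  have := signChanges_append_le L₁ L₂
  simp only [braidB, List.map_append, List.sum_append]
  omega

lemma two_le_braidB {L : List ℤ} (hL : L ≠ []) (h : ∀ x ∈ L, x ≠ 0) : 2 ≤ braidB L := by
  have hsum : (L.length : ℤ) ≤ (L.map (|·|)).sum := by
    simpa using List.card_nsmul_le_sum (L.map (|·|)) 1
      (by simpa using fun x hx => Int.one_le_abs (h x hx))
  have hsc : signChanges L ≤ L.length - 1 :=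
    (Finset.card_filter_le _ _).trans (Finset.card_range _).le
  have : 0 < L.length := List.length_pos_iff.mpr hL
  simp only [braidB]
  omega

lemma le_braidB_flatMap_range_append {F : ℕ → List ℤ} {n : ℕ} {b : ℤ}
    (hF : ∀ j < n, b ≤ braidB (F j)) (T : List ℤ) :
    n * (b - 2) + braidB T ≤ braidB ((List.range n).flatMap F ++ T) := by
  induction n generalizing T with
  | zero => simp
  | succ n ih =>
    rw [List.range_succ, List.flatMap_append, List.flatMap_singleton, List.append_assoc]
    push_cast
    linarith [ih (fun j hj => hF j (by omega)) (F n ++ T), le_braidB_append (F n) T,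
      hF n n.lt_succ_self]

theorem braidB_tildeSeq_ge_general (m r : ℕ) (hm : 1 ≤ m) (hr : 1 ≤ r)
    (a : List ℤ) (ha_len : a.length = 2 * m) (ha : ∀ x ∈ a, x ≠ 0)
    (ε : ℕ → ℤ) (hε : ∀ j ≤ 2 * r, ε j = 1 ∨ ε j = -1)
    (c : ℕ → ℤ) (hc : ∀ j < 2 * r, c j ≠ 0) :
    braidB (tildeSeq r a ε c) ≥ 3 * braidB a - 4 := by
  have hε_abs : ∀ j ≤ 2 * r, |ε j| = 1 := fun j hj => by
    rcases hε j hj with h | h <;> simp [h]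
  have hpiece : ∀ j < 2 * r,
      braidB a ≤ braidB ((if j % 2 = 0 then a else a.reverse).map (ε j * ·) ++ [c j]) := by
    intro j hj
    have hblock : braidB ((if j % 2 = 0 then a else a.reverse).map (ε j * ·)) = braidB a := by
      rw [braidB_map_mul (hε_abs j hj.le)]
      split_ifs
      exacts [rfl, braidB_reverse a]
    have := le_braidB_append ((if j % 2 = 0 then a else a.reverse).map (ε j * ·)) [c j]
    rw [hblock, braidB_singleton] at this
    linarith [Int.one_le_abs (hc j hj)]
  have htilde : (2 * r : ℕ) * (braidB a - 2) + braidB a ≤ braidB (tildeSeq r a ε c) := by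
    have h := le_braidB_flatMap_range_append hpiece (a.map (ε (2 * r) * ·))
    rwa [braidB_map_mul (hε_abs (2 * r) le_rfl)] at h
  have hB : 2 ≤ braidB a := two_le_braidB (List.ne_nil_of_length_pos (by omega)) ha
  have hr' : (1 : ℤ) ≤ r := by exact_mod_cast hr
  push_cast at htilde
  nlinarith [mul_nonneg (sub_nonneg.mpr hr') (sub_nonneg.mpr hB)]

/-- Theorem 3.1 (combinatorial core): if `ã` is the ORS concatenated sequence built
from `a`, then `B(ã) ≥ 3 B(a) - 4`. -/
theorem braidB_tildeSeq_ge (m r : ℕ) (hm : 1 ≤ m) (hr : 1 ≤ r)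
    (a : List ℤ) (ha_len : a.length = 2 * m) (ha : ∀ x ∈ a, x ≠ 0)
    (ε : ℕ → ℤ) (hε : ∀ j ≤ 2 * r, ε j = 1 ∨ ε j = -1) (hε0 : ε 0 = 1)
    (c : ℕ → ℤ) (hc : ∀ j < 2 * r, c j ≠ 0) :
    braidB (tildeSeq r a ε c) ≥ 3 * braidB a - 4 :=
  braidB_tildeSeq_ge_general m r hm hr a ha_len ha ε hε c hc
end

section
/- Let m, r ≥ 1, let a = (a_1, …, a_{2m}) be the alternating sequence with a_i = (−1)^{i−1} (so a = (1, −1, 1, −1, …, 1, −1)), let ε_1, …, ε_{2r+1} ∈ {1, −1} with ε_1 = 1, and let c_1, …, c_{2r} be nonzero integers. Let ã be the concatenated sequence (ε_1 a, c_1, ε_2 a^{rev}, c_2, ε_3 a, c_3, …, ε_{2r} a^{rev}, c_{2r}, ε_{2r+1} a), where ε a denotes the sequence (ε a_1, …, ε a_{2m}) and a^{rev} = (a_{2m}, …, a_1). If B(ã) = 2, then ε_j = 1 for all 1 ≤ j ≤ 2r+1 and c_j = (−1)^{j−1} for all 1 ≤ j ≤ 2r; consequently ã is the alternating sequence (1,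 −1, 1, −1, …, 1, −1) of length (2r+1)·2m + 2r. (This shows that a two-bridge knot of braid index 2 admitting an epimorphism onto the torus knot T(2m+1, 2) must be the torus knot T((2r+1)(2m+1), 2).) -/
/-- The alternating sequence `(1, -1, 1, -1, …)` of length `N`. -/
def altSeq (N : ℕ) : List ℤ :=
  (List.range N).map (fun i => (-1 : ℤ) ^ i)

@[simp]
lemma length_altSeq (N : ℕ) : (altSeq N).length = N := by simp [altSeq]

lemma altSeq_add (n k : ℕ) : altSeq (n + k) = altSeq n ++ (altSeq k).map ((-1) ^ n * ·) := by
  simp [altSeq, List.range_add, pow_add, Function.comp_def]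

lemma altSeq_succ (n : ℕ) : altSeq (n + 1) = altSeq n ++ [(-1) ^ n] := by
  simp [altSeq, List.range_succ]

lemma altSeq_succ' (n : ℕ) : altSeq (n + 1) = 1 :: (altSeq n).map (- ·) := by
  rw [Nat.add_comm, altSeq_add]; simp [altSeq]

lemma reverse_altSeq (n : ℕ) : (altSeq n).reverse = (altSeq n).map ((-1) ^ (n + 1) * ·) := by
  induction n with
  | zero => rfl
  | succ n ih =>
    conv_rhs => rw [altSeq_succ']
    rw [altSeq_succ, List.reverse_append, ih]
    simp [Function.comp_def, pow_succ]

lemma eq_map_altSeq_of_altSeq_eq_append {N : ℕ} {P Q R : List ℤ} (h : altSeq N = P ++ Q ++ R) :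
    Q = (altSeq Q.length).map ((-1) ^ P.length * ·) := by
  have hN : N = P.length + Q.length + R.length := by
    simpa [Nat.add_assoc] using congrArg List.length h
  rw [hN, altSeq_add, altSeq_add] at h
  obtain ⟨hPQ, -⟩ := List.append_inj' h (by simp)
  exact (List.append_inj' hPQ (by simp)).2.symm

lemma eq_of_map_mul_altSeq_eq {n : ℕ} (hn : n ≠ 0) {x y : ℤ}
    (h : (altSeq n).map (x * ·) = (altSeq n).map (y * ·)) : x = y := by
  obtain ⟨n, rfl⟩ := Nat.exists_eq_succ_of_ne_zero hn
  simp only [altSeq_succ', List.map_cons, List.cons.injEq] at h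
  simpa using h.1

lemma ne_zero_of_mem_altSeq {n : ℕ} {x : ℤ} (hx : x ∈ altSeq n) : x ≠ 0 := by
  obtain ⟨i, -, rfl⟩ := List.mem_map.mp hx
  exact pow_ne_zero i (by norm_num)

lemma ite_altSeq_two_mul_reverse (m j : ℕ) :
    (if j % 2 = 0 then altSeq (2 * m) else (altSeq (2 * m)).reverse) =
      (altSeq (2 * m)).map ((-1) ^ j * ·) := by
  rw [reverse_altSeq, (odd_two_mul_add_one m).neg_one_pow]
  split_ifs with hj
  · simp [(Nat.even_iff.mpr hj).neg_one_pow]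
  · simp [(Nat.odd_iff.mpr (by omega : j % 2 = 1)).neg_one_pow]

lemma eq_neg_of_mul_neg_of_abs_eq_one {x y : ℤ} (hx : |x| = 1) (hy : |y| = 1) (h : x * y < 0) :
    y = -x := by
  rcases abs_eq_abs.mp (hx.trans hy.symm) with rfl | rfl
  · nlinarith
  · exact (neg_neg y).symm

lemma length_le_sum_abs {L : List ℤ} (h : ∀ x ∈ L, x ≠ 0) :
    (L.length : ℤ) ≤ (L.map (|·|)).sum := by
  simpa using List.sum_le_sum (f := fun _ => (1 : ℤ)) fun x hx => Int.one_le_abs (h x hx)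

lemma abs_eq_one_of_sum_abs_eq_length {L : List ℤ} (h : ∀ x ∈ L, x ≠ 0)
    (hsum : (L.map (|·|)).sum = L.length) : ∀ x ∈ L, |x| = 1 := by
  by_contra! ⟨x, hx, hx1⟩
  have hlt := List.sum_lt_sum (fun _ => (1 : ℤ)) (|·|) (fun y hy => Int.one_le_abs (h y hy))
    ⟨x, hx, lt_of_le_of_ne (Int.one_le_abs (h x hx)) (Ne.symm hx1)⟩
  simp [hsum] at hlt

lemma signChanges_le (L : List ℤ) : signChanges L ≤ L.length - 1 :=
  (Finset.card_filter_le _ _).trans_eq (Finset.card_range _)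

lemma mul_getElem_succ_neg_of_signChanges_eq {L : List ℤ} (h : signChanges L = L.length - 1)
    {i : ℕ} (hi : i + 1 < L.length) : L[i] * L[i + 1] < 0 := by
  have := (Finset.card_filter_eq_iff.mp ((Finset.card_range _).trans h.symm).symm) i
    (Finset.mem_range.mpr (by omega))
  rwa [List.getD_eq_getElem _ _ (by omega), List.getD_eq_getElem _ _ hi] at this

theorem eq_altSeq_of_braidB_eq_two {L : List ℤ} (h0 : ∀ x ∈ L, x ≠ 0)
    (hhead : L.head? = some 1) (hB : braidB L = 2) : L = altSeq L.length := by
  have hpos : 0 < L.length := by cases L <;> simp_all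
  have hsum := length_le_sum_abs h0
  have ht := signChanges_le L
  unfold braidB at hB
  have habs := abs_eq_one_of_sum_abs_eq_length h0 (by omega)
  have hneg : signChanges L = L.length - 1 := by omega
  have hget : ∀ i (hi : i < L.length), L[i] = (-1) ^ i := by
    intro i
    induction i with
    | zero => intro hi; simpa [List.head?_eq_getElem?, List.getElem?_eq_getElem hi] using hhead
    | succ i ih =>
      intro hi
      rw [eq_neg_of_mul_neg_of_abs_eq_one (habs _ (List.getElem_mem _))
        (habs _ (List.getElem_mem _)) (mul_getElem_succ_neg_of_signChanges_eq hneg hi),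
        ih (by omega), pow_succ, mul_neg_one]
  exact List.ext_getElem (by simp) fun i h _ => by simp [hget i h, altSeq]

section tildeSeq

variable {r : ℕ} {a : List ℤ} {ε c : ℕ → ℤ}

variable (a ε c) in
lemma tildeSeq_eq_append_block {j : ℕ} (hj : j < 2 * r) :
    ∃ P R, P.length = j * (a.length + 1) ∧ tildeSeq r a ε c =
      P ++ ((if j % 2 = 0 then a else a.reverse).map (ε j * ·) ++ [c j]) ++ R := by
  obtain ⟨k, hk⟩ := Nat.exists_eq_add_of_lt hj
  refine ⟨_, _, ?_, by rw [tildeSeq, show 2 * r = j + 1 + k by omega, List.range_add,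
    List.range_succ, List.flatMap_append, List.flatMap_append, List.flatMap_singleton,
    List.append_assoc]⟩
  simp [List.length_flatMap, apply_ite List.length]

variable (r a ε c) in
lemma tildeSeq_eq_append_last :
    ∃ P, P.length = 2 * r * (a.length + 1) ∧ tildeSeq r a ε c = P ++ a.map (ε (2 * r) * ·) :=
  ⟨_, by simp [List.length_flatMap, apply_ite List.length], rfl⟩

lemma length_tildeSeq : (tildeSeq r a ε c).length = 2 * r * (a.length + 1) + a.length := by
  obtain ⟨P, hP, h⟩ := tildeSeq_eq_append_last r a ε c
  simp [h, hP]

lemma head?_tildeSeq (x : ℤ) : (tildeSeq r (x :: a) ε c).head? = some (ε 0 * x) := by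
  cases r with
  | zero => simp [tildeSeq]
  | succ r =>
    rw [tildeSeq, show 2 * (r + 1) = 2 * r + 1 + 1 by ring, List.range_succ_eq_map]
    simp

lemma ne_zero_of_mem_tildeSeq (ha : ∀ x ∈ a, x ≠ 0) (hε : ∀ j ≤ 2 * r, ε j ≠ 0)
    (hc : ∀ j < 2 * r, c j ≠ 0) : ∀ x ∈ tildeSeq r a ε c, x ≠ 0 := by
  simp only [tildeSeq, List.mem_append, List.mem_flatMap, List.mem_range, List.mem_map,
    List.mem_singleton]
  rintro x (⟨j, hj, ⟨y, hy, rfl⟩ | rfl⟩ | ⟨y, hy, rfl⟩)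
  · exact mul_ne_zero (hε j hj.le) (ha y (by split_ifs at hy <;> simp_all))
  · exact hc j hj
  · exact mul_ne_zero (hε _ le_rfl) (ha y hy)

end tildeSeq

section tildeSeq_altSeq

variable {m r N : ℕ} {ε c : ℕ → ℤ}

lemma sign_eq_one_and_entry_eq_of_tildeSeq_eq_altSeq (hm : m ≠ 0)
    (h : tildeSeq r (altSeq (2 * m)) ε c = altSeq N) {j : ℕ} (hj : j < 2 * r) :
    ε j = 1 ∧ c j = (-1) ^ j := by
  obtain ⟨P, R, hP, hdec⟩ := tildeSeq_eq_append_block (altSeq (2 * m)) ε c hj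
  have hblock := eq_map_altSeq_of_altSeq_eq_append (h.symm.trans hdec)
  have hsign : (-1 : ℤ) ^ P.length = (-1) ^ j := by
    rw [hP, length_altSeq, pow_mul', (odd_two_mul_add_one m).neg_one_pow]
  rw [hsign, ite_altSeq_two_mul_reverse, List.map_map] at hblock
  simp only [List.length_append, List.length_map, length_altSeq, List.length_singleton,
    altSeq_succ, (even_two_mul m).neg_one_pow, List.map_append, List.map_singleton, mul_one,
    Function.comp_def, ← mul_assoc] at hblock
  obtain ⟨hε, hc⟩ := List.append_inj' hblock rfl
  refine ⟨?_, by simpa using hc⟩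
  simpa using eq_of_map_mul_altSeq_eq (n := 2 * m) (by omega) hε

lemma last_sign_eq_one_of_tildeSeq_eq_altSeq (hm : m ≠ 0)
    (h : tildeSeq r (altSeq (2 * m)) ε c = altSeq N) : ε (2 * r) = 1 := by
  obtain ⟨P, hP, hdec⟩ := tildeSeq_eq_append_last r (altSeq (2 * m)) ε c
  have hlast := eq_map_altSeq_of_altSeq_eq_append (R := []) (by rw [List.append_nil, ← hdec, h])
  rw [List.length_map, length_altSeq, hP, pow_mul, pow_mul, neg_one_sq, one_pow, one_pow] at hlast
  simpa using eq_of_map_mul_altSeq_eq (n := 2 * m) (by omega) hlast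

end tildeSeq_altSeq

theorem braidB_tildeSeq_eq_two_general (m r : ℕ) (hm : 1 ≤ m)
    (ε : ℕ → ℤ) (hε : ∀ j ≤ 2 * r, ε j = 1 ∨ ε j = -1) (hε0 : ε 0 = 1)
    (c : ℕ → ℤ) (hc : ∀ j < 2 * r, c j ≠ 0)
    (hB : braidB (tildeSeq r (altSeq (2 * m)) ε c) = 2) :
    (∀ j ≤ 2 * r, ε j = 1) ∧ (∀ j < 2 * r, c j = (-1) ^ j) ∧
      tildeSeq r (altSeq (2 * m)) ε c = altSeq ((2 * r + 1) * (2 * m) + 2 * r) := by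
  have hm0 : m ≠ 0 := by omega
  have hnz : ∀ x ∈ tildeSeq r (altSeq (2 * m)) ε c, x ≠ 0 :=
    ne_zero_of_mem_tildeSeq (fun _ => ne_zero_of_mem_altSeq)
      (fun j hj => by rcases hε j hj with h | h <;> simp [h]) hc
  have hhead : (tildeSeq r (altSeq (2 * m)) ε c).head? = some 1 := by
    rw [show 2 * m = (2 * m - 1) + 1 by omega, altSeq_succ', head?_tildeSeq, hε0, mul_one]
  have hL : tildeSeq r (altSeq (2 * m)) ε c = altSeq ((2 * r + 1) * (2 * m) + 2 * r) := by
    rw [eq_altSeq_of_braidB_eq_two hnz hhead hB, length_tildeSeq, length_altSeq]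
    congr 1
    ring
  have hblock := fun j (hj : j < 2 * r) =>
    sign_eq_one_and_entry_eq_of_tildeSeq_eq_altSeq hm0 hL hj
  refine ⟨fun j hj => ?_, fun j hj => (hblock j hj).2, hL⟩
  rcases hj.lt_or_eq with hj | rfl
  · exact (hblock j hj).1
  · exact last_sign_eq_one_of_tildeSeq_eq_altSeq hm0 hL

/-- If a two-bridge knot of braid index `2` admits an epimorphism onto the torus knot
`T(2m+1, 2)` (whose continued fraction is the alternating sequence `a = (1, -1, …, 1, -1)`
of length `2m`), then in the ORS form all `ε_j = 1` and `c_j = (-1)^(j-1)`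
(in `0`-based indexing, `ε j = 1` for `j ≤ 2r` and `c j = (-1)^j` for `j < 2r`);
consequently `ã` is the alternating sequence of length `(2r+1)·2m + 2r`, i.e. the
knot is the torus knot `T((2r+1)(2m+1), 2)`. -/
theorem braidB_tildeSeq_eq_two (m r : ℕ) (hm : 1 ≤ m) (hr : 1 ≤ r)
    (ε : ℕ → ℤ) (hε : ∀ j ≤ 2 * r, ε j = 1 ∨ ε j = -1) (hε0 : ε 0 = 1)
    (c : ℕ → ℤ) (hc : ∀ j < 2 * r, c j ≠ 0)
    (hB : braidB (tildeSeq r (altSeq (2 * m)) ε c) = 2) :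
    (∀ j ≤ 2 * r, ε j = 1) ∧ (∀ j < 2 * r, c j = (-1) ^ j) ∧
      tildeSeq r (altSeq (2 * m)) ε c = altSeq ((2 * r + 1) * (2 * m) + 2 * r) :=
  braidB_tildeSeq_eq_two_general m r hm ε hε hε0 c hc hB
end
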